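/- Assume α_k → ∞ and ε_k → 0, and let the sequences satisfy the inexact penalty KKT conditions for every k. Suppose K ⊆ ℕ is infinite, x^k → x* along K, and α_k·y_i^k → 0 along K for every index i with x*_i ≠ 0. Then x* ∈ X and x* is an AS-stationary point of (SPO). -/

import Mathlib

/-!
Enumerating `K` increasingly reduces everything to limits along `atTop`. The residual bounds of
the inexact KKT conditions pass to the limit: `|min{-gᵢ(xᵏ), λᵢᵏ}| ≤ εₖ` gives `gᵢ(x*) ≤ 0`,
`‖h(xᵏ)‖ ≤ εₖ` gives `h(x*) = 0`, and `xᵏ ≥ 0` gives `x* ≥ 0`. The iterates themselves witness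
AS-stationarity: where `x*ᵢ > 0`, the complementarity `min{xᵢᵏ, (νₓᵏ)ᵢ} ≤ εₖ` forces
`(νₓᵏ)ᵢ → 0`, so `∂L/∂xᵢ(xᵏ, λᵏ, μᵏ)` differs from the `i`-th gradient residual only by the
vanishing terms `αₖ yᵢᵏ` and `(νₓᵏ)ᵢ`.
-/

open Filter Topology

noncomputable section

/-- Euclidean n-space. -/
abbrev E (n : ℕ) : Type := EuclideanSpace ℝ (Fin n)

/-- Regard a plain function as a vector of Euclidean space. -/
def vec {ι : Type*} [Fintype ι] (v : ι → ℝ) : EuclideanSpace ℝ ι :=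
  (WithLp.equiv 2 (ι → ℝ)).symm v

/-- The SP-Lagrangian L(x, λ, μ) = f(x) + λᵀg(x) + μᵀh(x). -/
def LSP {n m q : ℕ} (f : E n → ℝ) (g : Fin m → E n → ℝ) (h : Fin q → E n → ℝ)
    (lam : Fin m → ℝ) (mu : Fin q → ℝ) (x : E n) : ℝ :=
  f x + (∑ i, lam i * g i x) + (∑ j, mu j * h j x)

/-- AS-stationarity (approximate S-stationarity) of x* for (SPO). -/
def ASStat {n m q : ℕ} (f : E n → ℝ) (g : Fin m → E n → ℝ) (h : Fin q → E n → ℝ)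
    (xstar : E n) : Prop :=
  ∃ (xk : ℕ → E n) (lamk : ℕ → Fin m → ℝ) (muk : ℕ → Fin q → ℝ),
    Tendsto xk atTop (𝓝 xstar) ∧
    (∀ k i, 0 ≤ lamk k i) ∧
    (∀ i, xstar i ≠ 0 →
      Tendsto (fun k => gradient (LSP f g h (lamk k) (muk k)) (xk k) i) atTop (𝓝 0)) ∧
    (∀ i, Tendsto (fun k => min (-(g i (xk k))) (lamk k i)) atTop (𝓝 0))

/-- The inexact penalty KKT conditions at stage k (step 2 of the exact penalty
algorithm). -/
def inexactKKT {n m q : ℕ} (f : E n → ℝ) (g : Fin m → E n → ℝ) (h : Fin q → E n → ℝ)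
    (p : Fin n → ℝ → ℝ) (α ε : ℝ)
    (x y : E n) (νx νy : E n) (lam : Fin m → ℝ) (mu : Fin q → ℝ) : Prop :=
  (∀ i, 0 ≤ x i) ∧ (∀ i, 0 ≤ y i) ∧ (∀ i, 0 ≤ lam i) ∧
  (∀ i, 0 ≤ νx i) ∧ (∀ i, 0 ≤ νy i) ∧
  ‖gradient f x + (∑ i, lam i • gradient (g i) x) + (∑ j, mu j • gradient (h j) x) +
      α • y - νx‖ ≤ ε ∧
  ‖vec (fun i => deriv (p i) (y i) + α * x i - νy i)‖ ≤ ε ∧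
  (∀ i, |min (-(g i x)) (lam i)| ≤ ε) ∧
  ‖vec (fun j => h j x)‖ ≤ ε ∧
  (∀ i, min (x i) (νx i) ≤ ε) ∧
  (∀ i, min (y i) (νy i) ≤ ε)

lemma Set.Infinite.exists_tendsto_atTop_inf_principal {K : Set ℕ} (hK : K.Infinite) :
    ∃ φ : ℕ → ℕ, Tendsto φ atTop (atTop ⊓ 𝓟 K) := by
  obtain ⟨φ, hφ, hφK⟩ :=
    extraction_of_frequently_atTop (Nat.frequently_atTop_iff_infinite.2 hK)
  exact ⟨φ, tendsto_inf.2 ⟨hφ.tendsto_atTop, tendsto_principal.2 (Eventually.of_forall hφK)⟩⟩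

section Limits

variable {ι : Type*} {l : Filter ι} {ε : ι → ℝ}

lemma tendsto_apply_zero_of_norm_le {κ : Type*} [Fintype κ] {v : ι → EuclideanSpace ℝ κ}
    (hv : ∀ k, ‖v k‖ ≤ ε k) (hε : Tendsto ε l (𝓝 0)) (i : κ) :
    Tendsto (fun k => v k i) l (𝓝 0) :=
  squeeze_zero_norm (fun k => (PiLp.norm_apply_le (v k) i).trans (hv k)) hε

lemma nonneg_of_tendsto_of_abs_min_le [l.NeBot] {a b : ι → ℝ} {a₀ : ℝ}
    (ha : Tendsto a l (𝓝 a₀)) (hε : Tendsto ε l (𝓝 0))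
    (hab : ∀ k, |min (a k) (b k)| ≤ ε k) : 0 ≤ a₀ := by
  have hlim : Tendsto (fun k => a k + ε k) l (𝓝 a₀) := by simpa using ha.add hε
  refine ge_of_tendsto' hlim fun k => ?_
  linarith [neg_abs_le (min (a k) (b k)), min_le_left (a k) (b k), hab k]

lemma tendsto_zero_of_min_le_of_tendsto_pos {a b : ι → ℝ} {a₀ : ℝ}
    (ha : Tendsto a l (𝓝 a₀)) (ha₀ : 0 < a₀) (hb : ∀ k, 0 ≤ b k) (hε : Tendsto ε l (𝓝 0))
    (hab : ∀ k, min (a k) (b k) ≤ ε k) : Tendsto b l (𝓝 0) := by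
  have hb_le : ∀ᶠ k in l, b k ≤ ε k := by
    filter_upwards [ha.eventually (eventually_gt_nhds (half_lt_self ha₀)),
      hε.eventually (eventually_lt_nhds (half_pos ha₀))] with k hak hεk
    exact (min_le_iff.1 (hab k)).resolve_left (by linarith)
  exact squeeze_zero' (Eventually.of_forall hb) hb_le hε

end Limits

section InexactKKT

variable {n m q : ℕ} {f : E n → ℝ} {g : Fin m → E n → ℝ} {h : Fin q → E n → ℝ}
  {p : Fin n → ℝ → ℝ} {xstar : E n}

lemma gradient_LSP {x : E n} (hf : DifferentiableAt ℝ f x)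
    (hg : ∀ i, DifferentiableAt ℝ (g i) x) (hh : ∀ j, DifferentiableAt ℝ (h j) x)
    (lam : Fin m → ℝ) (mu : Fin q → ℝ) :
    gradient (LSP f g h lam mu) x =
      gradient f x + (∑ i, lam i • gradient (g i) x) + (∑ j, mu j • gradient (h j) x) := by
  have hL : HasFDerivAt (LSP f g h lam mu)
      (fderiv ℝ f x + (∑ i, lam i • fderiv ℝ (g i) x) + (∑ j, mu j • fderiv ℝ (h j) x)) x :=
    (hf.hasFDerivAt.add (HasFDerivAt.fun_sum fun i _ => (hg i).hasFDerivAt.const_mul (lam i))).add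
      (HasFDerivAt.fun_sum fun j _ => (hh j).hasFDerivAt.const_mul (mu j))
  apply (InnerProductSpace.toDual ℝ (E n)).injective
  simp only [toDual_gradient, map_add, map_sum, map_smul, hL.fderiv]

theorem feasible_of_inexactKKT {ι : Type*} {l : Filter ι} [l.NeBot] {α ε : ι → ℝ}
    {x y νx νy : ι → E n} {lam : ι → Fin m → ℝ} {mu : ι → Fin q → ℝ}
    (hg : ∀ i, Continuous (g i)) (hh : ∀ j, Continuous (h j))
    (hKKT : ∀ k, inexactKKT f g h p (α k) (ε k) (x k) (y k) (νx k) (νy k) (lam k) (mu k))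
    (hε : Tendsto ε l (𝓝 0)) (hx : Tendsto x l (𝓝 xstar)) :
    (∀ i, g i xstar ≤ 0) ∧ (∀ j, h j xstar = 0) ∧ (∀ i, 0 ≤ xstar i) := by
  choose hx_nonneg _ _ _ _ _ _ hcompl_g hres_h _ _ using hKKT
  refine ⟨fun i => ?_, fun j => ?_, fun i => ?_⟩
  · have := nonneg_of_tendsto_of_abs_min_le (((hg i).tendsto xstar).comp hx).neg hε
      (hcompl_g · i)
    linarith
  · exact tendsto_nhds_unique (((hh j).tendsto xstar).comp hx)
      (tendsto_apply_zero_of_norm_le hres_h hε j)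
  · exact ge_of_tendsto' (((EuclideanSpace.proj i).continuous.tendsto xstar).comp hx)
      (hx_nonneg · i)

theorem asStat_of_inexactKKT {α ε : ℕ → ℝ} {x y νx νy : ℕ → E n} {lam : ℕ → Fin m → ℝ}
    {mu : ℕ → Fin q → ℝ} (hf : Differentiable ℝ f) (hg : ∀ i, Differentiable ℝ (g i))
    (hh : ∀ j, Differentiable ℝ (h j))
    (hKKT : ∀ k, inexactKKT f g h p (α k) (ε k) (x k) (y k) (νx k) (νy k) (lam k) (mu k))
    (hε : Tendsto ε atTop (𝓝 0)) (hx : Tendsto x atTop (𝓝 xstar))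
    (hxstar : ∀ i, 0 ≤ xstar i)
    (hαy : ∀ i, xstar i ≠ 0 → Tendsto (fun k => α k * y k i) atTop (𝓝 0)) :
    ASStat f g h xstar := by
  choose _ _ hlam hνx _ hres _ hcompl_g _ hcompl_x _ using hKKT
  refine ⟨x, lam, mu, hx, hlam, fun i hi => ?_,
    fun i => squeeze_zero_norm (hcompl_g · i) hε⟩
  have hνx_lim : Tendsto (fun k => νx k i) atTop (𝓝 0) :=
    tendsto_zero_of_min_le_of_tendsto_pos
      (((EuclideanSpace.proj i).continuous.tendsto xstar).comp hx) ((hxstar i).lt_of_ne' hi)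
      (hνx · i) hε (hcompl_x · i)
  have hlim := ((tendsto_apply_zero_of_norm_le hres hε i).sub (hαy i hi)).add hνx_lim
  rw [sub_zero, add_zero] at hlim
  refine hlim.congr fun k => ?_
  rw [gradient_LSP (hf _) (hg · _) (hh · _)]
  simp only [PiLp.sub_apply, PiLp.add_apply, PiLp.smul_apply, smul_eq_mul]
  ring

end InexactKKT

theorem stmt_18_general {n m q : ℕ}
    (f : E n → ℝ) (g : Fin m → E n → ℝ) (h : Fin q → E n → ℝ)
    (hf : ContDiff ℝ 1 f) (hg : ∀ i, ContDiff ℝ 1 (g i)) (hh : ∀ j, ContDiff ℝ 1 (h j))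
    (p : Fin n → ℝ → ℝ)
    (αk εk : ℕ → ℝ)
    (hε : Tendsto εk atTop (𝓝 0))
    (xk yk νxk νyk : ℕ → E n) (lamk : ℕ → Fin m → ℝ) (muk : ℕ → Fin q → ℝ)
    (hKKT : ∀ k, inexactKKT f g h p (αk k) (εk k) (xk k) (yk k) (νxk k) (νyk k)
      (lamk k) (muk k))
    (K : Set ℕ) (hK : K.Infinite) (xstar : E n)
    (hconv' : Tendsto xk (atTop ⊓ Filter.principal K) (𝓝 xstar))
    (hαy : ∀ i, xstar i ≠ 0 →
      Tendsto (fun k => αk k * yk k i) (atTop ⊓ Filter.principal K) (𝓝 0)) :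
    ((∀ i, g i xstar ≤ 0) ∧ (∀ j, h j xstar = 0) ∧ (∀ i, 0 ≤ xstar i)) ∧
    ASStat f g h xstar := by
  obtain ⟨φ, hφ⟩ := hK.exists_tendsto_atTop_inf_principal
  have hKKTφ := fun k => hKKT (φ k)
  have hεφ := hε.comp (hφ.mono_right inf_le_left)
  have hxφ := hconv'.comp hφ
  have hfeas := feasible_of_inexactKKT (fun i => (hg i).continuous) (fun j => (hh j).continuous)
    hKKTφ hεφ hxφ
  exact ⟨hfeas, asStat_of_inexactKKT (hf.differentiable one_ne_zero)
    (fun i => (hg i).differentiable one_ne_zero) (fun j => (hh j).differentiable one_ne_zero)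
    hKKTφ hεφ hxφ hfeas.2.2 fun i hi => (hαy i hi).comp hφ⟩

/-- if additionally α_k·y_i^k → 0 along K for all i ∉ I₀(x*),
then the limit x* is feasible and AS-stationary for (SPO). -/
theorem stmt_18 {n m q : ℕ} (hn : 1 ≤ n) {ρ : ℝ} (hρ : 0 < ρ)
    (f : E n → ℝ) (g : Fin m → E n → ℝ) (h : Fin q → E n → ℝ)
    (hf : ContDiff ℝ 1 f) (hg : ∀ i, ContDiff ℝ 1 (g i)) (hh : ∀ j, ContDiff ℝ 1 (h j))
    (p : Fin n → ℝ → ℝ) (s : Fin n → ℝ)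
    (hp : ∀ i, ContDiff ℝ 1 (p i))
    (hconv : ∀ i, ConvexOn ℝ Set.univ (p i))
    (hspos : ∀ i, 0 < s i)
    (hmin : ∀ i t, p i (s i) ≤ p i t)
    (hstrict : ∀ i t, t ≠ s i → p i (s i) < p i t)
    (hscale : ∀ i, p i 0 - p i (s i) = ρ)
    (αk εk : ℕ → ℝ) (hαpos : ∀ k, 0 < αk k) (hεnn : ∀ k, 0 ≤ εk k)
    (hα : Tendsto αk atTop atTop) (hε : Tendsto εk atTop (𝓝 0))
    (xk yk νxk νyk : ℕ → E n) (lamk : ℕ → Fin m → ℝ) (muk : ℕ → Fin q → ℝ)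
    (hKKT : ∀ k, inexactKKT f g h p (αk k) (εk k) (xk k) (yk k) (νxk k) (νyk k)
      (lamk k) (muk k))
    (K : Set ℕ) (hK : K.Infinite) (xstar : E n)
    (hconv' : Tendsto xk (atTop ⊓ Filter.principal K) (𝓝 xstar))
    (hαy : ∀ i, xstar i ≠ 0 →
      Tendsto (fun k => αk k * yk k i) (atTop ⊓ Filter.principal K) (𝓝 0)) :
    ((∀ i, g i xstar ≤ 0) ∧ (∀ j, h j xstar = 0) ∧ (∀ i, 0 ≤ xstar i)) ∧
    ASStat f g h xstar :=
  stmt_18_general f g h hf hg hh p αk εk hε xk yk νxk νyk lamk muk hKKT K hK xstar hconv' hαy
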